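/- Let {X_n} be a sequence of complex-valued random variables on a common probability space, and let F_n denote the distribution function of |X_n|. Suppose there exist N ∈ ℕ, a real number a > 1, and a decreasing function f : [a,∞) → [0,1] such that ∫_a^∞ f(x)/x dx < ∞ and 1 − F_n(x) ≤ f(x) for all x ∈ [a,∞) and all n ≥ N; and suppose there exist N' ∈ ℕ, a real number b with 0 < b < 1, and an increasing function g : [0,b] → [0,1] such that ∫_0^b g(x)/x dx < ∞ and F_n(x) ≤ g(x) for all x ∈ [0,b] and all n ≥ N'. Then lim_{n→∞} |X_n|^{1/n} = 1 almost surely. -/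

import Mathlib

/-!
For `c > 1`, the events `{|Xₙ| > cⁿ}` have probabilities at most `f (cⁿ)`, and
`log c * ∑ f (cⁿ) ≤ ∫_a^∞ f(x)/x dx < ∞` because `f` is decreasing and `(cⁿ, cⁿ⁺¹]` has
logarithmic length `log c`. Symmetrically `P(|Xₙ| ≤ c⁻ⁿ) ≤ g (c⁻ⁿ)` is summable. By Borel–Cantelli,
almost surely `c⁻¹ < |Xₙ|^(1/n) ≤ c` for all large `n`; intersecting over countably many
`c ↓ 1` gives the limit.
-/

open MeasureTheory Filter Set Real Topology

lemma mul_log_div_le_setIntegral_div {φ : ℝ → ℝ} {m p q : ℝ} (hp : 0 < p) (hpq : p ≤ q)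
    (hφ : IntegrableOn (fun x => φ x / x) (Ioc p q)) (hm : ∀ x ∈ Ioc p q, m ≤ φ x) :
    m * log (q / p) ≤ ∫ x in Ioc p q, φ x / x := by
  have hinv : IntegrableOn (fun x => m / x) (Ioc p q) :=
    (continuousOn_const.div continuousOn_id fun x hx => (hp.trans_le hx.1).ne').integrableOn_Icc
      |>.mono_set Ioc_subset_Icc_self
  calc m * log (q / p) = ∫ x in Ioc p q, m / x := by
        rw [← integral_inv_of_pos hp (hp.trans_le hpq), ← intervalIntegral.integral_const_mul,
          intervalIntegral.integral_of_le hpq]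
        simp only [div_eq_mul_inv]
    _ ≤ ∫ x in Ioc p q, φ x / x := setIntegral_mono_on hinv hφ measurableSet_Ioc fun x hx =>
        div_le_div_of_nonneg_right (hm x hx) (hp.trans hx.1).le

lemma summable_of_le_on_disjoint_Ioc {φ : ℝ → ℝ} {S : Set ℝ} {c : ℝ} (hc : 1 < c)
    (hφ : IntegrableOn (fun x => φ x / x) S) {p v : ℕ → ℝ} (hp : ∀ n, 0 < p n)
    (hd : Pairwise (Function.onFun Disjoint fun n => Ioc (p n) (p n * c)))
    (hS : ∀ n, Ioc (p n) (p n * c) ⊆ S) (hv0 : ∀ n, 0 ≤ v n)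
    (hv : ∀ n, ∀ x ∈ Ioc (p n) (p n * c), v n ≤ φ x) : Summable v := by
  have hblocks : Summable fun n => ∫ x in Ioc (p n) (p n * c), φ x / x :=
    (hasSum_integral_iUnion (fun _ => measurableSet_Ioc) hd
      (hφ.mono_set (iUnion_subset hS))).summable
  refine (hblocks.div_const (log c)).of_nonneg_of_le hv0 fun n => ?_
  rw [le_div_iff₀ (log_pos hc)]
  simpa only [mul_div_cancel_left₀ _ (hp n).ne'] using
    mul_log_div_le_setIntegral_div (hp n) (le_mul_of_one_le_right (hp n).le hc.le)
      (hφ.mono_set (hS n)) (hv n)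

lemma summable_comp_pow_of_antitoneOn {f : ℝ → ℝ} {a c : ℝ} (hc : 1 < c)
    (hf : AntitoneOn f (Ici a)) (hf0 : ∀ x ∈ Ici a, 0 ≤ f x)
    (hint : IntegrableOn (fun x => f x / x) (Ici a)) : Summable fun n => f (c ^ n) := by
  obtain ⟨M, hM⟩ := pow_unbounded_of_one_lt a hc
  have ha : ∀ n ≥ M, a ≤ c ^ n := fun n hn => hM.le.trans (pow_le_pow_right₀ hc.le hn)
  have hmono : Monotone fun n => c ^ (n + M) := fun m n h => pow_le_pow_right₀ hc.le (by omega)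
  rw [← summable_nat_add_iff (M + 1)]
  refine summable_of_le_on_disjoint_Ioc hc hint (p := fun n => c ^ (n + M))
    (fun n => by positivity) ?_ (fun n x hx => (ha _ le_add_self).trans hx.1.le)
    (fun n => hf0 _ (ha (n + (M + 1)) (by omega))) fun n x hx => ?_
  · simpa only [Order.succ_eq_add_one, add_right_comm _ 1, pow_succ] using
      hmono.pairwise_disjoint_on_Ioc_succ
  · have hx2 : x ≤ c ^ (n + (M + 1)) := by rw [← add_assoc, pow_succ]; exact hx.2
    exact hf ((ha _ le_add_self).trans hx.1.le) (ha _ (by omega)) hx2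

lemma summable_comp_inv_pow_of_monotoneOn {g : ℝ → ℝ} {b c : ℝ} (hb : 0 < b) (hc : 1 < c)
    (hg : MonotoneOn g (Ioc 0 b)) (hg0 : ∀ x ∈ Ioc 0 b, 0 ≤ g x)
    (hint : IntegrableOn (fun x => g x / x) (Ioc 0 b)) : Summable fun n => g (c⁻¹ ^ n) := by
  have hc0 : 0 < c⁻¹ := inv_pos.2 (zero_lt_one.trans hc)
  obtain ⟨M, hM⟩ := exists_pow_lt_of_lt_one hb (inv_lt_one_of_one_lt₀ hc)
  have hmem : ∀ n ≥ M, c⁻¹ ^ n ∈ Ioc 0 b := fun n hn =>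
    ⟨by positivity, (pow_le_pow_of_le_one hc0.le (inv_lt_one_of_one_lt₀ hc).le hn).trans hM.le⟩
  have hanti : Antitone fun n => c⁻¹ ^ (n + M) := fun m n h =>
    pow_le_pow_of_le_one hc0.le (inv_lt_one_of_one_lt₀ hc).le (by omega)
  have hblock : ∀ n, c⁻¹ ^ (n + M + 1) * c = c⁻¹ ^ (n + M) := fun n => by
    rw [pow_succ, mul_assoc, inv_mul_cancel₀ (zero_lt_one.trans hc).ne', mul_one]
  have hsub : ∀ n, Ioc (c⁻¹ ^ (n + M + 1)) (c⁻¹ ^ (n + M + 1) * c) ⊆ Ioc 0 b := fun n x hx => by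
    rw [hblock] at hx
    exact ⟨(hmem _ (by omega)).1.trans hx.1, hx.2.trans (hmem _ le_add_self).2⟩
  rw [← summable_nat_add_iff (M + 1)]
  refine summable_of_le_on_disjoint_Ioc hc hint (p := fun n => c⁻¹ ^ (n + M + 1))
    (fun n => by positivity) ?_ hsub (fun n => hg0 _ (hmem (n + (M + 1)) (by omega)))
    fun n x hx => hg (hmem _ (by omega)) (hsub n hx) hx.1.le
  simpa only [hblock, Order.succ_eq_add_one, add_right_comm _ 1] using
    hanti.pairwise_disjoint_on_Ioc_succ

section BorelCantelli

variable {Ω : Type*} [MeasurableSpace Ω] {μ : Measure Ω}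

lemma ae_eventually_notMem_of_measureReal_le [IsFiniteMeasure μ] {s : ℕ → Set Ω} {v : ℕ → ℝ}
    (hv : Summable v) (h : ∀ᶠ n in atTop, μ.real (s n) ≤ v n) :
    ∀ᵐ ω ∂μ, ∀ᶠ n in atTop, ω ∉ s n := by
  have hs : Summable fun n => μ.real (s n) :=
    hv.of_norm_bounded_eventually_nat (h.mono fun n hn => by
      rwa [Real.norm_of_nonneg measureReal_nonneg])
  refine ae_eventually_notMem ?_
  convert ENNReal.ofReal_ne_top (r := ∑' n, μ.real (s n)) using 1
  rw [ENNReal.ofReal_tsum_of_nonneg (fun _ => measureReal_nonneg) hs]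
  exact tsum_congr fun n => (ofReal_measureReal (measure_ne_top μ _)).symm

variable {Y : ℕ → Ω → ℝ} {c : ℝ}

lemma ae_eventually_le_pow_of_tail_le [IsProbabilityMeasure μ] (hY : ∀ n, Measurable (Y n))
    {N : ℕ} {a : ℝ} {f : ℝ → ℝ} (hf : AntitoneOn f (Ici a)) (hf0 : ∀ x ∈ Ici a, 0 ≤ f x)
    (hint : IntegrableOn (fun x => f x / x) (Ici a))
    (htail : ∀ n, N ≤ n → ∀ x ∈ Ici a, 1 - μ.real {ω | Y n ω ≤ x} ≤ f x) (hc : 1 < c) :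
    ∀ᵐ ω ∂μ, ∀ᶠ n in atTop, Y n ω ≤ c ^ n := by
  obtain ⟨M, hM⟩ := pow_unbounded_of_one_lt a hc
  have hbound : ∀ᶠ n in atTop, μ.real {ω | c ^ n < Y n ω} ≤ f (c ^ n) := by
    filter_upwards [eventually_ge_atTop (max N M)] with n hn
    have hcompl : {ω | c ^ n < Y n ω} = {ω | Y n ω ≤ c ^ n}ᶜ := by ext; simp
    rw [hcompl, probReal_compl_eq_one_sub (measurableSet_le (hY n) measurable_const)]
    exact htail n (le_of_max_le_left hn) _
      (hM.le.trans (pow_le_pow_right₀ hc.le (le_of_max_le_right hn)))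
  filter_upwards [ae_eventually_notMem_of_measureReal_le
    (summable_comp_pow_of_antitoneOn hc hf hf0 hint) hbound] with ω hω
  exact hω.mono fun n hn => not_lt.1 hn

lemma ae_eventually_inv_pow_lt_of_cdf_le [IsFiniteMeasure μ] {N : ℕ} {b : ℝ} (hb : 0 < b)
    {g : ℝ → ℝ} (hg : MonotoneOn g (Ioc 0 b)) (hg0 : ∀ x ∈ Ioc 0 b, 0 ≤ g x)
    (hint : IntegrableOn (fun x => g x / x) (Ioc 0 b))
    (hcdf : ∀ n, N ≤ n → ∀ x ∈ Ioc 0 b, μ.real {ω | Y n ω ≤ x} ≤ g x) (hc : 1 < c) :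
    ∀ᵐ ω ∂μ, ∀ᶠ n in atTop, c⁻¹ ^ n < Y n ω := by
  obtain ⟨M, hM⟩ := exists_pow_lt_of_lt_one hb (inv_lt_one_of_one_lt₀ hc)
  have hbound : ∀ᶠ n in atTop, μ.real {ω | Y n ω ≤ c⁻¹ ^ n} ≤ g (c⁻¹ ^ n) := by
    filter_upwards [eventually_ge_atTop (max N M)] with n hn
    refine hcdf n (le_of_max_le_left hn) _ ⟨by positivity, le_trans ?_ hM.le⟩
    exact pow_le_pow_of_le_one (by positivity) (inv_lt_one_of_one_lt₀ hc).le
      (le_of_max_le_right hn)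
  filter_upwards [ae_eventually_notMem_of_measureReal_le
    (summable_comp_inv_pow_of_monotoneOn hb hc hg hg0 hint) hbound] with ω hω
  exact hω.mono fun n hn => not_le.1 hn

end BorelCantelli

lemma tendsto_rpow_one_div_of_eventually_le_pow {u : ℕ → ℝ} (hu : ∀ n, 0 ≤ u n) {c : ℕ → ℝ}
    (hc : Tendsto c atTop (𝓝 1)) (h : ∀ k, ∀ᶠ n in atTop, (c k)⁻¹ ^ n ≤ u n ∧ u n ≤ c k ^ n) :
    Tendsto (fun n => u n ^ (1 / (n : ℝ))) atTop (𝓝 1) := by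
  have hpos : ∀ᶠ k in atTop, 0 < c k := hc.eventually (lt_mem_nhds one_pos)
  refine tendsto_order.2 ⟨fun l hl => ?_, fun r hr => ?_⟩
  · have hinv : ∀ᶠ k in atTop, l < (c k)⁻¹ :=
      (hc.inv₀ one_ne_zero).eventually (lt_mem_nhds (by rwa [inv_one]))
    obtain ⟨k, hk0, hk⟩ := (hpos.and hinv).exists
    filter_upwards [h k, eventually_ne_atTop 0] with n hn hn0
    rw [one_div]
    refine hk.trans_le ((le_rpow_inv_iff_of_pos (by positivity) (hu n) (by positivity)).2 ?_)
    rw [rpow_natCast]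
    exact hn.1
  · obtain ⟨k, hk0, hk⟩ := (hpos.and (hc.eventually (gt_mem_nhds hr))).exists
    filter_upwards [h k, eventually_ne_atTop 0] with n hn hn0
    rw [one_div]
    refine lt_of_le_of_lt ((rpow_inv_le_iff_of_pos (hu n) hk0.le (by positivity)).2 ?_) hk
    rw [rpow_natCast]
    exact hn.2

theorem tendsto_abs_rpow_one_general
    {Ω : Type*} [MeasurableSpace Ω] (μ : Measure Ω) [IsProbabilityMeasure μ]
    (X : ℕ → Ω → ℂ) (hX : ∀ n, Measurable (X n))
    (N : ℕ) (a : ℝ) (f : ℝ → ℝ)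
    (hf_anti : AntitoneOn f (Set.Ici a))
    (hf_mem : ∀ x ∈ Set.Ici a, f x ∈ Set.Icc (0 : ℝ) 1)
    (hf_int : IntegrableOn (fun x => f x / x) (Set.Ici a))
    (htail : ∀ n, N ≤ n → ∀ x ∈ Set.Ici a,
      1 - (μ {ω | ‖X n ω‖ ≤ x}).toReal ≤ f x)
    (N' : ℕ) (b : ℝ) (hb0 : 0 < b) (g : ℝ → ℝ)
    (hg_mono : MonotoneOn g (Set.Icc 0 b))
    (hg_mem : ∀ x ∈ Set.Icc 0 b, g x ∈ Set.Icc (0 : ℝ) 1)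
    (hg_int : IntegrableOn (fun x => g x / x) (Set.Ioc 0 b))
    (hsmall : ∀ n, N' ≤ n → ∀ x ∈ Set.Icc 0 b,
      (μ {ω | ‖X n ω‖ ≤ x}).toReal ≤ g x) :
    ∀ᵐ ω ∂μ,
      Tendsto (fun n : ℕ => ‖X n ω‖ ^ (1 / (n : ℝ))) atTop (nhds 1) := by
  set c : ℕ → ℝ := fun k => 1 + 1 / ((k : ℝ) + 1)
  have hc1 : ∀ k, 1 < c k := fun k => lt_add_of_pos_right 1 (by positivity)
  have hc : Tendsto c atTop (𝓝 1) := by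
    simpa [c] using tendsto_one_div_add_atTop_nhds_zero_nat.const_add (1 : ℝ)
  have hbounds : ∀ k, ∀ᵐ ω ∂μ, ∀ᶠ n in atTop, (c k)⁻¹ ^ n < ‖X n ω‖ ∧ ‖X n ω‖ ≤ c k ^ n := by
    intro k
    filter_upwards [ae_eventually_inv_pow_lt_of_cdf_le hb0 (hg_mono.mono Ioc_subset_Icc_self)
        (fun x hx => (hg_mem x (Ioc_subset_Icc_self hx)).1) hg_int
        (fun n hn x hx => hsmall n hn x (Ioc_subset_Icc_self hx)) (hc1 k),
      ae_eventually_le_pow_of_tail_le (fun n => (hX n).norm) hf_anti (fun x hx => (hf_mem x hx).1)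
        hf_int htail (hc1 k)] with ω hlower hupper
    exact hlower.and hupper
  filter_upwards [ae_all_iff.2 hbounds] with ω hω
  exact tendsto_rpow_one_div_of_eventually_le_pow (fun n => norm_nonneg _) hc
    fun k => (hω k).mono fun n hn => ⟨hn.1.le, hn.2⟩

/-- Under both the tail bound (Assumption 1: `1 - Fₙ(x) ≤ f(x)` on `[a,∞)` for
`n ≥ N`, `f` decreasing on `[a,∞)` with values in `[0,1]` and `∫_a^∞ f(x)/x dx < ∞`) and the
bound near zero (Assumption 2: `Fₙ(x) ≤ g(x)` on `[0,b]` for `n ≥ N'`, `g` increasing on `[0,b]`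
with values in `[0,1]` and `∫_0^b g(x)/x dx < ∞`), one has `lim_{n→∞} |Xₙ|^{1/n} = 1`
almost surely. -/
theorem tendsto_abs_rpow_one
    {Ω : Type*} [MeasurableSpace Ω] (μ : Measure Ω) [IsProbabilityMeasure μ]
    (X : ℕ → Ω → ℂ) (hX : ∀ n, Measurable (X n))
    (N : ℕ) (a : ℝ) (ha : 1 < a) (f : ℝ → ℝ)
    (hf_anti : AntitoneOn f (Set.Ici a))
    (hf_mem : ∀ x ∈ Set.Ici a, f x ∈ Set.Icc (0 : ℝ) 1)
    (hf_int : IntegrableOn (fun x => f x / x) (Set.Ici a))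
    (htail : ∀ n, N ≤ n → ∀ x ∈ Set.Ici a,
      1 - (μ {ω | ‖X n ω‖ ≤ x}).toReal ≤ f x)
    (N' : ℕ) (b : ℝ) (hb0 : 0 < b) (hb1 : b < 1) (g : ℝ → ℝ)
    (hg_mono : MonotoneOn g (Set.Icc 0 b))
    (hg_mem : ∀ x ∈ Set.Icc 0 b, g x ∈ Set.Icc (0 : ℝ) 1)
    (hg_int : IntegrableOn (fun x => g x / x) (Set.Ioc 0 b))
    (hsmall : ∀ n, N' ≤ n → ∀ x ∈ Set.Icc 0 b,
      (μ {ω | ‖X n ω‖ ≤ x}).toReal ≤ g x) :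
    ∀ᵐ ω ∂μ,
      Tendsto (fun n : ℕ => ‖X n ω‖ ^ (1 / (n : ℝ))) atTop (nhds 1) :=
  tendsto_abs_rpow_one_general μ X hX N a f hf_anti hf_mem hf_int htail N' b hb0 g hg_mono hg_mem
    hg_int hsmall
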